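/- arXiv:1801.05322 — 2 statements merged into one kernel-verified Lean document; each statement's English description precedes it below -/
import Mathlib

section
/- Let T_n : [0,2] → [0,2] (n ≥ 2) be given by T_n(x) = x for x ∈ [0, 2n/(2n-1)] and T_n(x) = (1/n - 1)x + 2 for x ∈ (2n/(2n-1), 2]. If K ⊆ [0,2] is a nonempty compact set invariant under all T_n (n ≥ 2), then K ∩ [0,1] ≠ ∅. -/
theorem stmt_13
    (T : ℕ → ℝ → ℝ)
    (hT : T = fun (n : ℕ) (x : ℝ) => if x ≤ 2 * n / (2 * n - 1) then x else (1 / n - 1) * x + 2)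
    (K : Set ℝ) (hKsub : K ⊆ Set.Icc 0 2) (hKne : K.Nonempty) (hKcomp : IsCompact K)
    (hKinv : ∀ n : ℕ, 2 ≤ n → Set.MapsTo (T n) K K) :
    (K ∩ Set.Icc 0 1).Nonempty := by
  obtain ⟨x₀, hx₀K, hlb⟩ := hKcomp.exists_isLeast hKne
  by_cases hx1 : x₀ ≤ 1
  · exact ⟨x₀, hx₀K, (hKsub hx₀K).1, hx1⟩
  push_neg at hx1
  -- x₀ > 1, derive contradiction
  exfalso
  obtain ⟨n, hn⟩ := exists_nat_gt (max 2 (1 / (x₀ - 1)))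
  have hn2 : 2 ≤ n := by
    have := (le_max_left 2 (1 / (x₀ - 1))).trans hn.le
    exact_mod_cast this
  have hnR : (1 : ℝ) / (x₀ - 1) < n := (le_max_right _ _).trans_lt hn
  have hx0pos : 0 < x₀ - 1 := by linarith
  have hnx : 1 < (n : ℝ) * (x₀ - 1) := by
    rw [div_lt_iff₀ hx0pos] at hnR
    linarith [mul_comm (x₀ - 1) (n : ℝ)]
  have hnR2 : (2 : ℝ) ≤ n := by exact_mod_cast hn2
  have hden : (0 : ℝ) < 2 * n - 1 := by linarith
  have hthr : 2 * (n : ℝ) / (2 * n - 1) < x₀ := by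
    rw [div_lt_iff₀ hden]
    nlinarith
  have hTx : T n x₀ = (1 / n - 1) * x₀ + 2 := by
    rw [hT]
    simp only [not_le.mpr hthr, if_false]
  have hmem : T n x₀ ∈ K := hKinv n hn2 hx₀K
  have hle : x₀ ≤ (1 / n - 1) * x₀ + 2 := hTx ▸ hlb hmem
  have hnpos : (0 : ℝ) < n := by linarith
  have : x₀ * (2 * n - 1) ≤ 2 * n := by
    have h := mul_le_mul_of_nonneg_right hle hnpos.le
    have h1 : (1 / (n : ℝ)) * n = 1 := by field_simp
    nlinarith
  nlinarith
end

section
/- For each integer n ≥ 2, with T_m and P_n as in the example (T_m(x) = x on [0, 2m/(2m-1)], T_m(x) = (1/m - 1)x + 2 otherwise; P_n(x) = x on [0,1], P_n(x) = 1 on (1, n/(n-1)), P_n(x) = (1/n - 1)x + 2 on [n/(n-1), 2]): every closed subset K of [0,2] invariant under all T_m (m ≥ 2) is also P_n-invariant, i.e., P_n(K) ⊆ K. -/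
/-!
Below 1 the map `P_n` is the identity and from `n / (n - 1)` on it agrees with `T_n`, so the only
issue is the value 1 taken on `(1, n / (n - 1))`. For `y ∈ (1, 2)` some `T_m` moves `y` into
`[1, y)`; hence the least point of the compact set `K ∩ [1, x]` (for any `x ∈ K ∩ (1, 2)`) is 1.
-/

open Set

noncomputable def tMap (m : ℕ) (x : ℝ) : ℝ :=
  if x ≤ 2 * m / (2 * m - 1) then x else (1 / m - 1) * x + 2

noncomputable def pMap (n : ℕ) (x : ℝ) : ℝ :=
  if x ≤ 1 then x else if x < n / (n - 1) then 1 else (1 / n - 1) * x + 2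

theorem IsClosed.mem_of_forall_exists_mem_Ico {α : Type*} [ConditionallyCompleteLinearOrder α]
    [TopologicalSpace α] [OrderTopology α] {K : Set α} (hK : IsClosed K) {a x : α}
    (hx : x ∈ K) (hax : a ≤ x) (hstep : ∀ y ∈ K, a < y → y ≤ x → ∃ z ∈ K, z ∈ Ico a y) :
    a ∈ K := by
  have hbdd : BddBelow (K ∩ Icc a x) := ⟨a, fun _ hy => hy.2.1⟩
  obtain ⟨hcK, hac, hcx⟩ := (hK.inter isClosed_Icc).csInf_mem ⟨x, hx, hax, le_rfl⟩ hbdd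
  refine hac.eq_or_lt.elim (· ▸ hcK) fun hlt => ?_
  obtain ⟨z, hzK, haz, hzc⟩ := hstep _ hcK hlt hcx
  exact absurd hzc (csInf_le hbdd ⟨hzK, haz, hzc.le.trans hcx⟩).not_gt

theorem tMap_of_lt {m : ℕ} {x : ℝ} (h : 2 * m / (2 * m - 1) < x) :
    tMap m x = (1 / m - 1) * x + 2 :=
  if_neg h.not_ge

-- With `d = y - 1`, the index `m = ⌊y / d⌋` satisfies `m d ≤ y < 2 m d`, which puts `y` past the
-- fold point of `T_m` and its image in `[1, y)`.
theorem exists_tMap_mem_Ico {y : ℝ} (h1 : 1 < y) (h2 : y < 2) :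
    ∃ m, 2 ≤ m ∧ tMap m y ∈ Ico 1 y := by
  set d := y - 1
  have hd : 0 < d := sub_pos.mpr h1
  set m := ⌊y / d⌋₊
  have hyd : 2 < y / d := by rw [lt_div_iff₀ hd]; linarith
  have hm2 : 2 ≤ m := Nat.le_floor (by push_cast; linarith)
  have hm : (2 : ℝ) ≤ m := by exact_mod_cast hm2
  have hmd_le : m * d ≤ y := (le_div_iff₀ hd).mp (Nat.floor_le (by positivity))
  have hmd_gt : y < 2 * (m * d) := by
    have := (div_lt_iff₀ hd).mp (Nat.lt_floor_add_one (y / d))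
    linarith
  have hfold : 2 * m / (2 * m - 1) < y := by
    rw [div_lt_iff₀ (by linarith)]; linarith
  refine ⟨m, hm2, ?_⟩
  rw [tMap_of_lt hfold, mem_Ico]
  have hm0 : (0 : ℝ) < m := by positivity
  constructor
  · rw [← sub_nonneg]
    have : (1 / m - 1) * y + 2 - 1 = (y - m * d) / m := by field_simp; ring
    rw [this]; exact div_nonneg (by linarith) hm0.le
  · rw [← sub_pos]
    have : y - ((1 / m - 1) * y + 2) = (2 * (m * d) - y) / m := by field_simp; ring
    rw [this]; exact div_pos (by linarith) hm0

theorem one_mem_of_mapsTo_tMap {K : Set ℝ} (hK : IsClosed K)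
    (hinv : ∀ m, 2 ≤ m → MapsTo (tMap m) K K) {x : ℝ} (hx : x ∈ K) (h1 : 1 < x) (h2 : x < 2) :
    (1 : ℝ) ∈ K :=
  hK.mem_of_forall_exists_mem_Ico hx h1.le fun y hy h1y hyx => by
    obtain ⟨m, hm, hmem⟩ := exists_tMap_mem_Ico h1y (hyx.trans_lt h2)
    exact ⟨_, hinv m hm hy, hmem⟩

theorem one_lt_natCast_div_natCast_sub_one {n : ℕ} (hn : 2 ≤ n) : 1 < (n : ℝ) / (n - 1) := by
  have : (2 : ℝ) ≤ n := by exact_mod_cast hn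
  rw [lt_div_iff₀ (by linarith)]; linarith

theorem natCast_div_natCast_sub_one_le_two {n : ℕ} (hn : 2 ≤ n) : (n : ℝ) / (n - 1) ≤ 2 := by
  have : (2 : ℝ) ≤ n := by exact_mod_cast hn
  rw [div_le_iff₀ (by linarith)]; linarith

theorem pMap_eq_tMap_of_le {n : ℕ} (hn : 2 ≤ n) {x : ℝ} (hx : n / (n - 1) ≤ x) :
    pMap n x = tMap n x := by
  have : (2 : ℝ) ≤ n := by exact_mod_cast hn
  have hfold : 2 * n / (2 * n - 1) < (n : ℝ) / (n - 1) := by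
    rw [div_lt_div_iff₀ (by linarith) (by linarith)]; nlinarith
  have h1 : ¬ x ≤ 1 := (one_lt_natCast_div_natCast_sub_one hn).trans_le hx |>.not_ge
  rw [tMap_of_lt (hfold.trans_le hx), pMap, if_neg h1, if_neg hx.not_gt]

theorem stmt_18_general
    (T P : ℕ → ℝ → ℝ)
    (hT : T = fun (n : ℕ) (x : ℝ) => if x ≤ 2 * n / (2 * n - 1) then x else (1 / n - 1) * x + 2)
    (hP : P = fun (n : ℕ) (x : ℝ) => if x ≤ 1 then x else if x < n / (n - 1) then 1 else (1 / n - 1) * x + 2)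
    (n : ℕ) (hn : 2 ≤ n)
    (K : Set ℝ) (hKcl : IsClosed K)
    (hKinv : ∀ m : ℕ, 2 ≤ m → Set.MapsTo (T m) K K) :
    Set.MapsTo (P n) K K := by
  subst hT hP
  change ∀ m, 2 ≤ m → MapsTo (tMap m) K K at hKinv
  change MapsTo (pMap n) K K
  intro x hx
  by_cases hx1 : x ≤ 1
  · rwa [pMap, if_pos hx1]
  by_cases hxn : x < n / (n - 1)
  · rw [pMap, if_neg hx1, if_pos hxn]
    exact one_mem_of_mapsTo_tMap hKcl hKinv hx (not_le.mp hx1)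
      (hxn.trans_le (natCast_div_natCast_sub_one_le_two hn))
  · rw [pMap_eq_tMap_of_le hn (not_lt.mp hxn)]
    exact hKinv n hn hx

theorem stmt_18
    (T P : ℕ → ℝ → ℝ)
    (hT : T = fun (n : ℕ) (x : ℝ) => if x ≤ 2 * n / (2 * n - 1) then x else (1 / n - 1) * x + 2)
    (hP : P = fun (n : ℕ) (x : ℝ) => if x ≤ 1 then x else if x < n / (n - 1) then 1 else (1 / n - 1) * x + 2)
    (n : ℕ) (hn : 2 ≤ n)
    (K : Set ℝ) (hKsub : K ⊆ Set.Icc 0 2) (hKcl : IsClosed K)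
    (hKinv : ∀ m : ℕ, 2 ≤ m → Set.MapsTo (T m) K K) :
    Set.MapsTo (P n) K K :=
  stmt_18_general T P hT hP n hn K hKcl hKinv
end
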